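/- arXiv:1407.4479 — 2 statements merged into one kernel-verified Lean document; each statement's English description precedes it below -/
import Mathlib

section
/- Let n > 1 be an integer and s > 1 a real number. Then Σ_{c=1}^∞ μ(nc)/(nc)^s = (μ(n)/(n^s − 1)) · Σ_{d | n, d ≠ n} μ(d) · (Σ_{c=1}^∞ μ(cd)/(cd)^s). -/
open ArithmeticFunction Finset
open scoped ArithmeticFunction.Moebius

/-!
Write `F d = ∑_c μ(cd)/(cd)^s` and `G = ∑_{(m,n)=1} μ(m)/m^s`. Since `∑_{d ∣ (n,m)} μ(d)` is the
indicator of `(n,m) = 1`, swapping the finite and the absolutely convergent sum gives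
`∑_{d ∣ n} μ(d) F(d) = G`. Multiplicativity of `μ`, together with `μ(cn) = 0` when `(c,n) > 1`,
gives `n^s F(n) = μ(n) G`. Splitting off `d = n` yields `n^s F(n) = μ(n) (P + μ(n) F(n))` with `P`
the sum over proper divisors, which is solved for `F(n)` using `μ(n) ∈ {0, ±1}` and `n^s > 1`.
-/

theorem tsum_pnat_mul_right_eq_tsum_ite_dvd {M : Type*} [AddCommMonoid M] [TopologicalSpace M]
    (f : ℕ → M) {d : ℕ} (hd : d ≠ 0) :
    ∑' c : ℕ+, f (c * d) = ∑' m : ℕ+, if d ∣ (m : ℕ) then f m else 0 := by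
  let d' : ℕ+ := ⟨d, Nat.pos_of_ne_zero hd⟩
  have h_supp : Function.support (fun m : ℕ+ => if d ∣ (m : ℕ) then f m else 0) ⊆
      Set.range (· * d') := by
    rintro m hm
    obtain ⟨k, hk⟩ : d ∣ (m : ℕ) := by_contra fun h => hm (if_neg h)
    have hk0 : 0 < k := Nat.pos_of_ne_zero (by rintro rfl; simp at hk)
    exact ⟨⟨k, hk0⟩, PNat.eq <| (mul_comm k d).trans hk.symm⟩
  rw [← (mul_left_injective d').tsum_eq h_supp]
  exact tsum_congr fun c => (if_pos (Dvd.intro_left _ rfl)).symm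

theorem sum_divisors_filter_dvd_moebius {R : Type*} [Ring R] {n : ℕ} (hn : n ≠ 0) (m : ℕ) :
    ∑ d ∈ n.divisors with d ∣ m, (μ d : R) = if n.Coprime m then 1 else 0 := by
  have h_filter : {d ∈ n.divisors | d ∣ m} = (n.gcd m).divisors := by
    rw [← Nat.divisors_filter_dvd_of_dvd hn (Nat.gcd_dvd_left n m)]
    exact filter_congr fun d hd =>
      (Nat.dvd_gcd_iff.trans (and_iff_right (Nat.dvd_of_mem_divisors hd))).symm
  have h := congr_arg (· (n.gcd m)) (coe_moebius_mul_coe_zeta (R := R))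
  simp only [coe_mul_zeta_apply, one_apply, intCoe_apply] at h
  simpa [h_filter, Nat.coprime_iff_gcd_eq_one] using h

theorem sum_divisors_moebius_mul_tsum_pnat_mul {R : Type*} [NormedRing R] [CompleteSpace R]
    (f : ℕ → R) (hf : Summable fun m : ℕ+ => f m) {n : ℕ} (hn : n ≠ 0) :
    ∑ d ∈ n.divisors, (μ d : R) * ∑' c : ℕ+, f (c * d) =
      ∑' m : ℕ+, if n.Coprime m then f m else 0 := by
  have h_summable (d : ℕ) : Summable fun m : ℕ+ => if d ∣ (m : ℕ) then f m else 0 :=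
    (hf.indicator {m : ℕ+ | d ∣ (m : ℕ)}).congr fun m => by simp [Set.indicator_apply]
  calc ∑ d ∈ n.divisors, (μ d : R) * ∑' c : ℕ+, f (c * d)
      = ∑ d ∈ n.divisors, ∑' m : ℕ+, (μ d : R) * if d ∣ (m : ℕ) then f m else 0 := by
        refine sum_congr rfl fun d hd => ?_
        rw [tsum_pnat_mul_right_eq_tsum_ite_dvd f (Nat.ne_of_gt (Nat.pos_of_mem_divisors hd)),
          (h_summable d).tsum_mul_left]
    _ = ∑' m : ℕ+, ∑ d ∈ n.divisors, (μ d : R) * if d ∣ (m : ℕ) then f m else 0 :=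
        (Summable.tsum_finsetSum fun d _ => (h_summable d).mul_left _).symm
    _ = ∑' m : ℕ+, if n.Coprime m then f m else 0 := by
        refine tsum_congr fun m => ?_
        simp_rw [mul_ite, mul_zero, ← sum_filter, ← sum_mul, sum_divisors_filter_dvd_moebius hn,
          ite_mul, one_mul, zero_mul]

theorem summable_moebius_div_rpow {s : ℝ} (hs : 1 < s) :
    Summable fun m : ℕ => (μ m : ℝ) / (m : ℝ) ^ s := by
  refine (Real.summable_nat_rpow_inv.mpr hs).of_norm_bounded fun m => ?_
  rw [norm_div, div_eq_inv_mul, Real.norm_of_nonneg (by positivity)]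
  refine mul_le_of_le_one_right (by positivity) ?_
  rw [Real.norm_eq_abs]
  exact_mod_cast abs_moebius_le_one

theorem rpow_mul_moebius_mul_div_rpow (n c : ℕ) (s : ℝ) :
    (n : ℝ) ^ s * ((μ (c * n) : ℝ) / ((c * n : ℕ) : ℝ) ^ s) =
      μ n * if n.Coprime c then (μ c : ℝ) / (c : ℝ) ^ s else 0 := by
  by_cases h : n.Coprime c
  · rw [if_pos h, isMultiplicative_moebius.map_mul_of_coprime h.symm, Nat.cast_mul,
      Real.mul_rpow (Nat.cast_nonneg _) (Nat.cast_nonneg _)]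
    rcases eq_or_ne n 0 with rfl | hn
    · simp
    have : (n : ℝ) ^ s ≠ 0 := by positivity
    push_cast
    field_simp
  · have h_not_sqfree : ¬Squarefree (c * n) := fun hsq => h (Nat.squarefree_mul_iff.mp hsq).1.symm
    simp [h, moebius_eq_zero_of_not_squarefree h_not_sqfree]

theorem eq_div_sub_one_mul_of_mul_eq {K : Type*} [Field K] {x a y p : K} (hx0 : x ≠ 0)
    (hx1 : x ≠ 1) (ha : a = 0 ∨ a = 1 ∨ a = -1) (h : x * y = a * (p + a * y)) :
    y = a / (x - 1) * p := by
  have hx1' : x - 1 ≠ 0 := sub_ne_zero.mpr hx1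
  rcases ha with rfl | rfl | rfl
  · simpa [hx0] using h
  · field_simp; linear_combination h
  · field_simp; linear_combination h

theorem moebius_series_recursion (n : ℕ) (hn : 1 < n) (s : ℝ) (hs : 1 < s) :
    ∑' c : ℕ+, (moebius (n * c) : ℝ) / ((n * c : ℕ) : ℝ) ^ s =
      (moebius n : ℝ) / ((n : ℝ) ^ s - 1) *
        ∑ d ∈ n.properDivisors,
          (moebius d : ℝ) * ∑' c : ℕ+, (moebius (c * d) : ℝ) / ((c * d : ℕ) : ℝ) ^ s := by
  set f : ℕ → ℝ := fun m => (μ m : ℝ) / (m : ℝ) ^ s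
  have hn0 : n ≠ 0 := by omega
  have h_inv := sum_divisors_moebius_mul_tsum_pnat_mul f
    ((summable_moebius_div_rpow hs).comp_injective PNat.coe_injective) hn0
  have h_mul : (n : ℝ) ^ s * ∑' c : ℕ+, f (c * n) =
      μ n * ∑' m : ℕ+, if n.Coprime m then f m else 0 := by
    rw [← tsum_mul_left, ← tsum_mul_left]
    exact tsum_congr fun c => rpow_mul_moebius_mul_div_rpow n c s
  rw [← h_inv, ← Nat.cons_self_properDivisors hn0, sum_cons, add_comm] at h_mul
  have h_one_lt : 1 < (n : ℝ) ^ s := Real.one_lt_rpow (by exact_mod_cast hn) (by linarith)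
  simp_rw [mul_comm n]
  refine eq_div_sub_one_mul_of_mul_eq (by positivity) h_one_lt.ne' ?_ h_mul
  rcases moebius_eq_or n with h | h | h <;> simp [h]
end

section
/- Let k be an integer and define the weight-k Hecke operator on formal q-expansions of level N by (Σ_{n∈ℤ} a_n q^n)|T_m = Σ_{n∈ℤ} (Σ_{d | gcd(m,n), gcd(d,N)=1} d^{k−1} a_{mn/d²}) q^n. If f has expansion q^{−ν} + O(q) (i.e. a_{−ν} = 1, a_n = 0 for −ν < n ≤ 0 and for n < −ν), and m is a positive integer with gcd(m, ν) = 1 and gcd(m, N) = 1, then m^{1−k}·(f|T_m) has expansion q^{−mν} + O(q), i.e. its coefficient at −mν is 1 and all other coefficients of index ≤ 0 vanish. -/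
/-!
Every divisor `d` in the sum defining the `n`-th coefficient of `f|T_m` divides both `m` and `n`,
so `mn/d²` is an exact quotient, and it is `≤ 0` when `n ≤ 0`. Hence the only term that can survive
is one with `mn = -νd²`. Writing `m = dc` and `n = -dt` this says `ct = ν`, so `c` divides
`gcd(m, ν) = 1`; thus `d = m` and `n = -mν`, and that single term is `m^{k-1} a_{-ν} = m^{k-1}`.
-/

open Finset

theorem Nat.eq_and_eq_mul_of_mul_eq_mul_sq {m n ν d : ℕ} (hmν : m.Coprime ν) (hdm : d ∣ m)
    (hdn : d ∣ n) (h : m * n = ν * d ^ 2) : d = m ∧ n = m * ν := by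
  obtain ⟨c, rfl⟩ := hdm
  obtain ⟨t, rfl⟩ := hdn
  rcases Nat.eq_zero_or_pos d with rfl | hd
  · simp
  have hct : c * t = ν := by
    apply Nat.eq_of_mul_eq_mul_left (pow_pos hd 2)
    linarith
  have hc : c = 1 := Nat.eq_one_of_dvd_coprimes hmν (Dvd.intro_left d rfl) (Dvd.intro t hct)
  subst hc
  exact ⟨(mul_one d).symm, by rw [← hct]; ring⟩

theorem Int.eq_and_eq_neg_mul_of_ediv_sq_eq_neg {m ν d : ℕ} {n : ℤ} (hmν : m.Coprime ν)
    (hn : n ≤ 0) (hdm : d ∣ m) (hdn : d ∣ n.natAbs) (h : (m : ℤ) * n / (d : ℤ) ^ 2 = -ν) :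
    d = m ∧ n = -((m * ν : ℕ) : ℤ) := by
  have hsq : (d : ℤ) ^ 2 ∣ m * n :=
    sq (d : ℤ) ▸ mul_dvd_mul (Int.natCast_dvd_natCast.mpr hdm) (Int.natCast_dvd.mpr hdn)
  have hmn : (m : ℤ) * n = -(ν * d ^ 2) := by
    rw [← Int.mul_ediv_cancel' hsq, h]
    ring
  have hnat : m * n.natAbs = ν * d ^ 2 := by
    zify
    rw [abs_of_nonpos hn]
    linear_combination -hmn
  obtain ⟨rfl, hn'⟩ := Nat.eq_and_eq_mul_of_mul_eq_mul_sq hmν hdm hdn hnat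
  exact ⟨rfl, by rw [← hn']; omega⟩

theorem apply_mul_ediv_sq_eq_zero {m ν d : ℕ} {n : ℤ} {a : ℤ → ℂ} (hmν : m.Coprime ν)
    (ha0 : ∀ n : ℤ, n ≤ 0 → n ≠ -(ν : ℤ) → a n = 0) (hn : n ≤ 0)
    (hd : d ∈ (m.gcd n.natAbs).divisors) (hne : ¬(d = m ∧ n = -((m * ν : ℕ) : ℤ))) :
    a ((m * n) / ((d : ℤ) ^ 2)) = 0 := by
  have hdm : d ∣ m := (Nat.dvd_of_mem_divisors hd).trans (Nat.gcd_dvd_left _ _)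
  have hdn : d ∣ n.natAbs := (Nat.dvd_of_mem_divisors hd).trans (Nat.gcd_dvd_right _ _)
  have hd0 : (0 : ℤ) < (d : ℤ) ^ 2 := by
    have := Nat.pos_of_mem_divisors hd
    positivity
  refine ha0 _ (Int.ediv_nonpos_of_nonpos_of_neg ?_ hd0) fun h => hne ?_
  · exact mul_nonpos_of_nonneg_of_nonpos (Int.natCast_nonneg m) hn
  · exact Int.eq_and_eq_neg_mul_of_ediv_sq_eq_neg hmν hn hdm hdn h

theorem hecke_principal_part_general (k : ℤ) (N m ν : ℕ) (hm : 0 < m)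
    (hmν : Nat.gcd m ν = 1) (hmN : Nat.gcd m N = 1)
    (a : ℤ → ℂ) (ha1 : a (-(ν : ℤ)) = 1)
    (ha0 : ∀ n : ℤ, n ≤ 0 → n ≠ -(ν : ℤ) → a n = 0)
    (T : ℤ → ℂ)
    (hT : ∀ n : ℤ, T n = ∑ d ∈ (Nat.gcd m n.natAbs).divisors,
        if Nat.Coprime d N then (d : ℂ) ^ (k - 1) * a ((m * n) / ((d : ℤ) ^ 2)) else 0) :
    (m : ℂ) ^ (1 - k) * T (-(m * ν : ℕ)) = 1 ∧
      ∀ n : ℤ, n ≤ 0 → n ≠ -((m * ν : ℕ) : ℤ) → (m : ℂ) ^ (1 - k) * T n = 0 := by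
  have hterm : ∀ n : ℤ, n ≤ 0 → ∀ d ∈ (m.gcd n.natAbs).divisors,
      ¬(d = m ∧ n = -((m * ν : ℕ) : ℤ)) →
        (if d.Coprime N then (d : ℂ) ^ (k - 1) * a ((m * n) / ((d : ℤ) ^ 2)) else 0) = 0 :=
    fun n hn d hd hne => by rw [apply_mul_ediv_sq_eq_zero hmν ha0 hn hd hne, mul_zero, ite_self]
  refine ⟨?_, fun n hn hne => ?_⟩
  · have hgcd : m.gcd (-((m * ν : ℕ) : ℤ)).natAbs = m := by
      rw [Int.natAbs_neg, Int.natAbs_natCast, Nat.gcd_eq_left (dvd_mul_right m ν)]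
    have harg : (m : ℤ) * -((m * ν : ℕ) : ℤ) / (m : ℤ) ^ 2 = -ν := by
      rw [Int.ediv_eq_of_eq_mul_left (by positivity)]
      push_cast
      ring
    rw [hT, hgcd, sum_eq_single_of_mem m (Nat.mem_divisors_self m hm.ne')
      fun d hd hdm => hterm _ (by omega) d (by rwa [hgcd]) fun h => hdm h.1,
      if_pos hmN, harg, ha1, mul_one, ← zpow_add₀ (by exact_mod_cast hm.ne')]
    simp
  · rw [hT, sum_eq_zero fun d hd => hterm n hn d hd fun h => hne h.2, mul_zero]

/-- Lemma on Hecke operators acting on q-expansions: if `f = q^{-ν} + O(q)` and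
`gcd(m,ν) = gcd(m,N) = 1`, then `m^{1-k} f|T_m = q^{-mν} + O(q)`. -/
theorem hecke_principal_part (k : ℤ) (N m ν : ℕ) (hm : 0 < m) (hν : 0 < ν)
    (hmν : Nat.gcd m ν = 1) (hmN : Nat.gcd m N = 1)
    (a : ℤ → ℂ) (ha1 : a (-(ν : ℤ)) = 1)
    (ha0 : ∀ n : ℤ, n ≤ 0 → n ≠ -(ν : ℤ) → a n = 0)
    (T : ℤ → ℂ)
    (hT : ∀ n : ℤ, T n = ∑ d ∈ (Nat.gcd m n.natAbs).divisors,
        if Nat.Coprime d N then (d : ℂ) ^ (k - 1) * a ((m * n) / ((d : ℤ) ^ 2)) else 0) :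
    (m : ℂ) ^ (1 - k) * T (-(m * ν : ℕ)) = 1 ∧
      ∀ n : ℤ, n ≤ 0 → n ≠ -((m * ν : ℕ) : ℤ) → (m : ℂ) ^ (1 - k) * T n = 0 :=
  hecke_principal_part_general k N m ν hm hmν hmN a ha1 ha0 T hT
end
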